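/- Let 𝒪 be a Dedekind domain which is not a field, with fraction field K. For each nonzero prime ideal 𝔭 of 𝒪, let 𝒪ᵖ^ denote the 𝔭-adic completion of 𝒪. Then the commutative square of 𝒪-modules with top-left corner 𝒪, top-right corner ∏_𝔭 𝒪ᵖ^ (the product over all nonzero prime ideals, with top map the product of the completion maps), bottom-left corner K (with left map the inclusion 𝒪 → K), and bottom-right corner K ⊗_𝒪 (∏_𝔭 𝒪ᵖ^) (with right map x ↦ 1 ⊗ x and bottom map q ↦ q ⊗ 1), is a pullback square. Equivalently, the sequence 0 → 𝒪 → K ⊕ ∏_𝔭 𝒪ᵖ^ → K ⊗_𝒪 (∏_𝔭 𝒪ᵖ^) is exact, where the first map is (inclusion, completion maps) and the second map sends (q, x) to q ⊗ 1 − 1 ⊗ x. -/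

import Mathlib

open scoped TensorProduct

/-- The product, over all nonzero prime ideals `𝔭` of `𝒪`, of the `𝔭`-adic completions of `𝒪`. -/
abbrev ProdAdicCompletions' (O : Type*) [CommRing O] : Type _ :=
  Π 𝔭 : {𝔭 : Ideal O // 𝔭 ≠ ⊥ ∧ 𝔭.IsPrime}, AdicCompletion 𝔭.1 O

/-- The map `𝒪 → K ⊕ ∏_𝔭 𝒪ᵖ^` given by the inclusion into the fraction field together with the
completion maps. -/
noncomputable def fractureFirstMap (O : Type*) [CommRing O] [IsDomain O] :
    O →ₗ[O] FractionRing O × ProdAdicCompletions' O :=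
  (Algebra.linearMap O (FractionRing O)).prod
    (LinearMap.pi fun 𝔭 : {𝔭 : Ideal O // 𝔭 ≠ ⊥ ∧ 𝔭.IsPrime} => AdicCompletion.of 𝔭.1 O)

/-- The map `K ⊕ ∏_𝔭 𝒪ᵖ^ → K ⊗_𝒪 ∏_𝔭 𝒪ᵖ^`, `(q, x) ↦ q ⊗ 1 − 1 ⊗ x`. -/
noncomputable def fractureSecondMap (O : Type*) [CommRing O] [IsDomain O] :
    FractionRing O × ProdAdicCompletions' O →ₗ[O]
      FractionRing O ⊗[O] ProdAdicCompletions' O :=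
  (((TensorProduct.mk O (FractionRing O) (ProdAdicCompletions' O)).flip 1).comp
      (LinearMap.fst O (FractionRing O) (ProdAdicCompletions' O))) -
    ((TensorProduct.mk O (FractionRing O) (ProdAdicCompletions' O) 1).comp
      (LinearMap.snd O (FractionRing O) (ProdAdicCompletions' O)))

/-! Exactness at the middle is the real content. Since `K ⊗ M` is the localization of `M` at the
nonzero elements, `q ⊗ 1 = 1 ⊗ x` means that, after clearing denominators, `q = a / b` with
`a = b • x` in `∏_𝔭 𝒪ᵖ^`. Reducing modulo `𝔭 ^ v_𝔭(b)` gives `v_𝔭(a) ≥ v_𝔭(b)` at every prime,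
so `b ∣ a` and `q ∈ 𝒪`; as the completions are flat, hence torsion-free, `x` is then the image
of `q` as well. -/

open IsDedekindDomain HeightOneSpectrum TensorProduct

theorem IsLocalization.exists_smul_eq_smul_of_tmul_eq_one_tmul {R A M : Type*} [CommRing R]
    (S : Submonoid R) [CommRing A] [Algebra R A] [IsLocalization S A] [AddCommGroup M]
    [Module R M] {q : A} {m x : M} (h : q ⊗ₜ[R] m = 1 ⊗ₜ x) :
    ∃ a, ∃ s ∈ S, algebraMap R A s * q = algebraMap R A a ∧ a • m = s • x := by
  obtain ⟨⟨a, s⟩, hq⟩ := IsLocalization.surj S q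
  have hzero : TensorProduct.mk R A M 1 (a • m - (s : R) • x) = 0 := by
    have hsq : (a • (1 : A)) ⊗ₜ[R] m = (s : R) • (q ⊗ₜ[R] m) := by
      rw [smul_tmul', ← Algebra.algebraMap_eq_smul_one, ← hq, mul_comm, ← Algebra.smul_def]
    rw [map_sub, map_smul, map_smul, mk_apply, mk_apply, smul_tmul', hsq, h, sub_self]
  obtain ⟨t, ht⟩ := (IsLocalizedModule.eq_zero_iff S _).mp hzero
  refine ⟨t * a, t * s, S.mul_mem t.2 s.2, ?_, ?_⟩
  · rw [map_mul, map_mul, mul_assoc, mul_comm _ q, hq]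
  · rwa [Submonoid.smul_def, smul_sub, sub_eq_zero, smul_smul, smul_smul] at ht

section TorsionFreeAlgebra

variable {R K B : Type*} [CommRing R] [IsDomain R] [Field K] [Algebra R K] [IsFractionRing R K]
  [CommRing B] [Algebra R B] [Module.IsTorsionFree R B]

theorem exists_algebraMap_eq_of_tmul_one_eq_one_tmul
    (hB : ∀ (a b : R) (x : B), b ≠ 0 → algebraMap R B a = b • x → b ∣ a) {q : K} {x : B}
    (h : q ⊗ₜ[R] (1 : B) = 1 ⊗ₜ x) : ∃ c : R, algebraMap R K c = q ∧ algebraMap R B c = x := by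
  obtain ⟨a, b, hb, hq, hx⟩ :=
    IsLocalization.exists_smul_eq_smul_of_tmul_eq_one_tmul (nonZeroDivisors R) h
  have hb0 : b ≠ 0 := nonZeroDivisors.ne_zero hb
  rw [← Algebra.algebraMap_eq_smul_one] at hx
  obtain ⟨c, rfl⟩ := hB a b x hb0 hx
  refine ⟨c, ?_, ?_⟩
  · refine (mul_left_cancel₀ ?_ (hq.trans (map_mul _ b c))).symm
    exact (map_ne_zero_iff _ (IsFractionRing.injective R K)).mpr hb0
  · rw [map_mul, ← Algebra.smul_def] at hx
    exact IsSMulRegular.of_ne_zero hb0 hx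

end TorsionFreeAlgebra

theorem AdicCompletion.mem_pow_of_of_eq_smul {R : Type*} [CommRing R] {I : Ideal R} {a b : R}
    {x : AdicCompletion I R} (h : of I R a = b • x) {n : ℕ} (hb : b ∈ I ^ n) : a ∈ I ^ n := by
  have h' := congrArg (evalₐ I n) h
  rwa [evalₐ_of, map_smul, Algebra.smul_def, Ideal.Quotient.algebraMap_eq,
    Ideal.Quotient.eq_zero_iff_mem.mpr hb, zero_mul, Ideal.Quotient.eq_zero_iff_mem] at h'

namespace IsDedekindDomain.HeightOneSpectrum

variable {O : Type*} [CommRing O] [IsDedekindDomain O]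

theorem intValuation_le_of_of_eq_smul (v : HeightOneSpectrum O) {a b : O} (hb : b ≠ 0)
    {x : AdicCompletion v.asIdeal O} (h : AdicCompletion.of v.asIdeal O a = b • x) :
    v.intValuation a ≤ v.intValuation b := by
  rw [v.intValuation_if_neg hb, intValuation_le_pow_iff_mem]
  refine AdicCompletion.mem_pow_of_of_eq_smul h ?_
  rw [← intValuation_le_pow_iff_mem, v.intValuation_if_neg hb]

theorem dvd_of_forall_intValuation_le {a b : O} (hb : b ≠ 0)
    (h : ∀ v : HeightOneSpectrum O, v.intValuation a ≤ v.intValuation b) : b ∣ a := by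
  have hbK : algebraMap O (FractionRing O) b ≠ 0 :=
    (map_ne_zero_iff _ (IsFractionRing.injective O _)).mpr hb
  obtain ⟨c, hc⟩ := mem_integers_of_valuation_le_one (FractionRing O)
    (algebraMap O _ a / algebraMap O _ b) fun v => by
      rw [map_div₀, valuation_of_algebraMap, valuation_of_algebraMap]
      exact div_le_one_of_le₀ (h v) zero_le
  refine ⟨c, IsFractionRing.injective O (FractionRing O) ?_⟩
  rw [map_mul, hc, mul_div_cancel₀ _ hbK]

end IsDedekindDomain.HeightOneSpectrum

theorem dvd_of_algebraMap_eq_smul_prodAdicCompletions {O : Type*} [CommRing O]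
    [IsDedekindDomain O] {a b : O} (hb : b ≠ 0) {x : ProdAdicCompletions' O}
    (h : algebraMap O (ProdAdicCompletions' O) a = b • x) : b ∣ a :=
  dvd_of_forall_intValuation_le hb fun v =>
    v.intValuation_le_of_of_eq_smul hb (congrFun h ⟨v.asIdeal, v.ne_bot, v.isPrime⟩)

theorem fractureFirstMap_apply (O : Type*) [CommRing O] [IsDomain O] (r : O) :
    fractureFirstMap O r =
      (algebraMap O (FractionRing O) r, algebraMap O (ProdAdicCompletions' O) r) :=
  rfl

theorem fractureSecondMap_apply (O : Type*) [CommRing O] [IsDomain O]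
    (q : FractionRing O) (x : ProdAdicCompletions' O) :
    fractureSecondMap O (q, x) = q ⊗ₜ 1 - 1 ⊗ₜ x := by
  simp [fractureSecondMap]

theorem arithmetic_fracture_square_general (O : Type*) [CommRing O] [IsDedekindDomain O] :
    Function.Injective (fractureFirstMap O) ∧
      Function.Exact (fractureFirstMap O) (fractureSecondMap O) := by
  refine ⟨fun r s h => IsFractionRing.injective O (FractionRing O) (congrArg Prod.fst h),
    fun ⟨q, x⟩ => ⟨fun h => ?_, ?_⟩⟩
  · rw [fractureSecondMap_apply, sub_eq_zero] at h
    obtain ⟨c, hq, hx⟩ := exists_algebraMap_eq_of_tmul_one_eq_one_tmul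
      (fun a b _ hb => dvd_of_algebraMap_eq_smul_prodAdicCompletions hb) h
    exact ⟨c, Prod.ext hq hx⟩
  · rintro ⟨r, hr⟩
    rw [← hr, fractureFirstMap_apply, fractureSecondMap_apply, Algebra.algebraMap_eq_smul_one r,
      Algebra.algebraMap_eq_smul_one r, smul_tmul, sub_self]

/-- The arithmetic fracture square (equation (6.2) of the paper): for a Dedekind domain `𝒪`
which is not a field, with fraction field `K`, the sequence
`0 → 𝒪 → K ⊕ ∏_𝔭 𝒪ᵖ^ → K ⊗_𝒪 ∏_𝔭 𝒪ᵖ^` is exact, where the product runs over all nonzero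
prime ideals of `𝒪`; equivalently, the evident commutative square with corners `𝒪`,
`∏_𝔭 𝒪ᵖ^`, `K`, and `K ⊗_𝒪 ∏_𝔭 𝒪ᵖ^` is a pullback. -/
theorem arithmetic_fracture_square (O : Type*) [CommRing O] [IsDomain O] [IsDedekindDomain O]
    (hO : ¬ IsField O) :
    Function.Injective (fractureFirstMap O) ∧
      Function.Exact (fractureFirstMap O) (fractureSecondMap O) :=
  arithmetic_fracture_square_general O
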